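/- Let φ be the standard Gaussian cdf. For any fixed ε > 1, as M → ∞, φ(√(2 log M)·ε)^M = 1 − e^{−(ε²−1) log M}/(2√(π log M)·ε) · (1 + O(1/(log M·(ε²−1)))). In particular φ(√(2 log M)·ε)^M → 1 for ε > 1. -/

import Mathlib

/-!
Write `t = √(2 log M) ε`, `Q = 1 - Φ(t)` and `A = M φ(t) / t`, which equals
`e^{-(ε²-1) log M} / (2 √(π log M) ε)`. Integrating `φ` by parts against `1/x` gives Mills'
bounds `φ(t)/t - φ(t)/t³ ≤ Q ≤ φ(t)/t`, so `0 ≤ A - M Q ≤ A / t²`. Bernoulli's inequality and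
`(1 - Q)^M ≤ e^{-MQ}` give `1 - MQ ≤ (1 - Q)^M ≤ 1 - MQ + (MQ)²`, hence
`0 ≤ Φ(t)^M - (1 - A) ≤ A² + A / t²`. Finally `x e^{-x} ≤ 1` gives `A ≤ 1 / (log M (ε² - 1))`,
and `1 / t² ≤ 1 / (log M (ε² - 1))`, so both error terms are `O(A / (log M (ε² - 1)))`.
-/

open Real Filter Asymptotics

noncomputable def stdGaussCdf (x : ℝ) : ℝ :=
  (ProbabilityTheory.cdf (ProbabilityTheory.gaussianReal 0 1)) x

open MeasureTheory Set ProbabilityTheory Topology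

lemma gaussianPDFReal_zero_one (x : ℝ) :
    gaussianPDFReal 0 1 x = (√(2 * π))⁻¹ * rexp (-x ^ 2 / 2) := by
  simp [gaussianPDFReal]

lemma hasDerivAt_gaussianPDFReal_zero_one (x : ℝ) :
    HasDerivAt (gaussianPDFReal 0 1) (-x * gaussianPDFReal 0 1 x) x := by
  have hexp : HasDerivAt (fun y => rexp (-y ^ 2 / 2)) (-x * rexp (-x ^ 2 / 2)) x := by
    convert (((hasDerivAt_pow 2 x).fun_neg).div_const 2).exp using 1
    ring
  rw [show gaussianPDFReal 0 1 = fun y => (√(2 * π))⁻¹ * rexp (-y ^ 2 / 2) from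
    funext gaussianPDFReal_zero_one]
  exact (hexp.const_mul _).congr_deriv (by ring)

lemma tendsto_gaussianPDFReal_zero_one_atTop :
    Tendsto (gaussianPDFReal 0 1) atTop (𝓝 0) := by
  have h : Tendsto (fun x : ℝ => -x ^ 2 / 2) atTop atBot :=
    (tendsto_neg_atBot_iff.mpr (tendsto_pow_atTop two_ne_zero)).atBot_div_const two_pos
  simpa [funext gaussianPDFReal_zero_one] using
    (tendsto_exp_atBot.comp h).const_mul (√(2 * π))⁻¹

lemma stdGaussCdf_eq_one_sub_integral_Ioi (t : ℝ) :
    stdGaussCdf t = 1 - ∫ x in Ioi t, gaussianPDFReal 0 1 x := by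
  rw [stdGaussCdf, cdf_eq_real, ← compl_Ioi, measureReal_compl measurableSet_Ioi, probReal_univ,
    measureReal_def, gaussianReal_apply_eq_integral 0 one_ne_zero, ENNReal.toReal_ofReal
      (setIntegral_nonneg measurableSet_Ioi fun x _ => gaussianPDFReal_nonneg 0 1 x)]

lemma integrable_mul_gaussianPDFReal : Integrable fun x => x * gaussianPDFReal 0 1 x := by
  refine ((integrable_mul_exp_neg_mul_sq (b := 1 / 2) one_half_pos).const_mul
    (√(2 * π))⁻¹).congr (ae_of_all _ fun x => ?_)
  simp only [gaussianPDFReal_zero_one]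
  ring_nf

lemma integral_Ioi_mul_gaussianPDFReal (t : ℝ) :
    ∫ x in Ioi t, x * gaussianPDFReal 0 1 x = gaussianPDFReal 0 1 t := by
  have hderiv (x : ℝ) (_ : x ∈ Ici t) :
      HasDerivAt (fun y => -gaussianPDFReal 0 1 y) (x * gaussianPDFReal 0 1 x) x :=
    (hasDerivAt_gaussianPDFReal_zero_one x).fun_neg.congr_deriv (by ring)
  simpa using integral_Ioi_of_hasDerivAt_of_tendsto' hderiv
    integrable_mul_gaussianPDFReal.integrableOn tendsto_gaussianPDFReal_zero_one_atTop.neg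

lemma hasDerivAt_neg_gaussianPDFReal_div_self {x : ℝ} (hx : x ≠ 0) :
    HasDerivAt (fun y => -(gaussianPDFReal 0 1 y / y))
      (gaussianPDFReal 0 1 x + gaussianPDFReal 0 1 x / x ^ 2) x := by
  refine ((hasDerivAt_gaussianPDFReal_zero_one x).div (hasDerivAt_id x) hx).neg.congr_deriv ?_
  simp only [id]
  field_simp
  ring

lemma integrableOn_Ioi_gaussianPDFReal_div_sq {t : ℝ} (ht : 0 < t) :
    IntegrableOn (fun x => gaussianPDFReal 0 1 x / x ^ 2) (Ioi t) := by
  refine ((integrable_gaussianPDFReal 0 1).integrableOn.div_const (t ^ 2)).mono'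
    ((measurable_gaussianPDFReal 0 1).div (by fun_prop)).aestronglyMeasurable
    ((ae_restrict_mem measurableSet_Ioi).mono fun x hx => ?_)
  have hx : t < x := hx
  rw [norm_div, norm_of_nonneg (gaussianPDFReal_nonneg 0 1 x), norm_pow,
    norm_of_nonneg (by linarith)]
  gcongr
  exact gaussianPDFReal_nonneg 0 1 x

lemma integral_Ioi_gaussianPDFReal_eq {t : ℝ} (ht : 0 < t) :
    ∫ x in Ioi t, gaussianPDFReal 0 1 x =
      gaussianPDFReal 0 1 t / t - ∫ x in Ioi t, gaussianPDFReal 0 1 x / x ^ 2 := by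
  have hderiv (x : ℝ) (hx : x ∈ Ici t) :=
    hasDerivAt_neg_gaussianPDFReal_div_self (ht.trans_le hx).ne'
  have htend : Tendsto (fun y => -(gaussianPDFReal 0 1 y / y)) atTop (𝓝 0) := by
    simpa [div_eq_mul_inv] using
      (tendsto_gaussianPDFReal_zero_one_atTop.mul tendsto_inv_atTop_zero).neg
  have hint := integrableOn_Ioi_gaussianPDFReal_div_sq ht
  have := integral_Ioi_of_hasDerivAt_of_tendsto' hderiv
    ((integrable_gaussianPDFReal 0 1).integrableOn.add hint) htend
  rw [integral_add (integrable_gaussianPDFReal 0 1).integrableOn hint] at this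
  linarith

lemma integral_Ioi_gaussianPDFReal_le {t : ℝ} (ht : 0 < t) :
    ∫ x in Ioi t, gaussianPDFReal 0 1 x ≤ gaussianPDFReal 0 1 t / t := by
  rw [integral_Ioi_gaussianPDFReal_eq ht, sub_le_self_iff]
  exact setIntegral_nonneg measurableSet_Ioi fun x _ =>
    div_nonneg (gaussianPDFReal_nonneg 0 1 x) (sq_nonneg x)

lemma sub_le_integral_Ioi_gaussianPDFReal {t : ℝ} (ht : 0 < t) :
    gaussianPDFReal 0 1 t / t - gaussianPDFReal 0 1 t / t ^ 3 ≤
      ∫ x in Ioi t, gaussianPDFReal 0 1 x := by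
  have hpoint (x : ℝ) (hx : x ∈ Ioi t) :
      gaussianPDFReal 0 1 x / x ^ 2 ≤ x * gaussianPDFReal 0 1 x / t ^ 3 := by
    have hx : t < x := hx
    have hx0 : 0 < x := ht.trans hx
    have hcube : t ^ 3 ≤ x ^ 3 := by gcongr
    rw [div_le_div_iff₀ (by positivity) (by positivity)]
    have := gaussianPDFReal_nonneg 0 1 x
    nlinarith
  have hle := setIntegral_mono_on (integrableOn_Ioi_gaussianPDFReal_div_sq ht)
    (integrable_mul_gaussianPDFReal.integrableOn.div_const _) measurableSet_Ioi hpoint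
  rw [integral_div, integral_Ioi_mul_gaussianPDFReal] at hle
  rw [integral_Ioi_gaussianPDFReal_eq ht]
  linarith

lemma Real.exp_neg_le_one_sub_add_sq {x : ℝ} (hx : 0 ≤ x) : rexp (-x) ≤ 1 - x + x ^ 2 := by
  have hinv : rexp (-x) * rexp x = 1 := by rw [← exp_add, neg_add_cancel, exp_zero]
  have h : rexp (-x) * (1 + x) ≤ 1 :=
    hinv ▸ mul_le_mul_of_nonneg_left (by linarith [add_one_le_exp x]) (exp_nonneg _)
  nlinarith [pow_nonneg hx 3]

lemma one_sub_pow_le {q : ℝ} (hq0 : 0 ≤ q) (hq1 : q ≤ 1) (n : ℕ) :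
    (1 - q) ^ n ≤ 1 - n * q + (n * q) ^ 2 :=
  calc (1 - q) ^ n ≤ rexp (-q) ^ n :=
        pow_le_pow_left₀ (by linarith) (by linarith [add_one_le_exp (-q)]) n
    _ = rexp (-(n * q)) := by rw [← exp_nat_mul, mul_neg]
    _ ≤ 1 - n * q + (n * q) ^ 2 := exp_neg_le_one_sub_add_sq (by positivity)

lemma one_sub_pow_sub_one_sub_mem_Icc {q a : ℝ} (n : ℕ) (hq0 : 0 ≤ q) (hq1 : q ≤ 1)
    (ha : n * q ≤ a) : (1 - q) ^ n - (1 - a) ∈ Icc 0 (a ^ 2 + (a - n * q)) := by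
  have hlow : 1 - n * q ≤ (1 - q) ^ n := by
    simpa [sub_eq_add_neg] using one_add_mul_le_pow (a := -q) (by linarith) n
  have hsq : (n * q) ^ 2 ≤ a ^ 2 := pow_le_pow_left₀ (by positivity) ha 2
  constructor <;> linarith [one_sub_pow_le hq0 hq1 n]

/-- Mills' approximation `M φ(t) / t` of the expected number `M (1 - Φ(t))` of exceedances of the
level `t = √(2 L) ε` among `M = e^L` independent standard Gaussians. -/
noncomputable def millsExceedance (ε L : ℝ) : ℝ := rexp (-(ε ^ 2 - 1) * L) / (2 * √(π * L) * ε)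

lemma exp_mul_gaussianPDFReal_div_eq_millsExceedance (ε : ℝ) {L : ℝ} (hL : 0 ≤ L) :
    rexp L * (gaussianPDFReal 0 1 (√(2 * L) * ε) / (√(2 * L) * ε)) = millsExceedance ε L := by
  have hsqrt : √(2 * π) * √(2 * L) = 2 * √(π * L) := by
    rw [← sqrt_mul (by positivity), show 2 * π * (2 * L) = 2 ^ 2 * (π * L) by ring,
      sqrt_mul (by positivity), sqrt_sq zero_le_two]
  have hexp : rexp L * rexp (-(√(2 * L) * ε) ^ 2 / 2) = rexp (-(ε ^ 2 - 1) * L) := by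
    rw [← exp_add, mul_pow, sq_sqrt (by positivity)]
    ring_nf
  rw [millsExceedance, gaussianPDFReal_zero_one, ← hexp, ← hsqrt]
  field_simp

lemma millsExceedance_nonneg {ε : ℝ} (hε : 0 ≤ ε) (L : ℝ) : 0 ≤ millsExceedance ε L := by
  unfold millsExceedance
  positivity

lemma millsExceedance_le {ε L : ℝ} (hε : 1 < ε) (hL : 1 ≤ L) :
    millsExceedance ε L ≤ 1 / (L * (ε ^ 2 - 1)) := by
  have hden : 1 ≤ 2 * √(π * L) * ε := by
    have : 1 ≤ √(π * L) := one_le_sqrt.mpr (by nlinarith [pi_gt_three])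
    nlinarith
  have hmax := mul_exp_neg_le_exp_neg_one ((ε ^ 2 - 1) * L)
  have he : rexp (-1) ≤ 1 := exp_le_one_iff.mpr (by norm_num)
  have hpos : 0 < L * (ε ^ 2 - 1) := mul_pos (by linarith) (by nlinarith)
  rw [millsExceedance, le_div_iff₀ hpos, div_mul_eq_mul_div,
    div_le_one (by linarith), neg_mul]
  nlinarith

lemma stdGaussCdf_pow_sub_mem_Icc {ε : ℝ} (hε : 1 < ε) {M : ℕ} (hM : 1 ≤ log M) :
    stdGaussCdf (√(2 * log M) * ε) ^ M - (1 - millsExceedance ε (log M)) ∈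
      Icc 0 (2 * (millsExceedance ε (log M) * (1 / (log M * (ε ^ 2 - 1))))) := by
  set L := log M
  set t := √(2 * L) * ε
  set A := millsExceedance ε L
  set B := 1 / (L * (ε ^ 2 - 1))
  set Q := ∫ x in Ioi t, gaussianPDFReal 0 1 x
  have ht : 0 < t := mul_pos (sqrt_pos.mpr (by linarith)) (by linarith)
  have ht2 : t ^ 2 = 2 * L * ε ^ 2 := by rw [mul_pow, sq_sqrt (by linarith)]
  have hQ0 : 0 ≤ Q :=
    setIntegral_nonneg measurableSet_Ioi fun x _ => gaussianPDFReal_nonneg 0 1 x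
  have hQ1 : Q ≤ 1 := by
    have := cdf_nonneg (gaussianReal 0 1) t
    rw [← stdGaussCdf, stdGaussCdf_eq_one_sub_integral_Ioi] at this
    linarith
  have hM1 : (1 : ℝ) < M := (log_pos_iff M.cast_nonneg).mp (by linarith)
  have hA : A = M * (gaussianPDFReal 0 1 t / t) := by
    rw [← exp_log (by linarith : (0 : ℝ) < M)]
    exact (exp_mul_gaussianPDFReal_div_eq_millsExceedance ε (by linarith)).symm
  have hMQ : M * Q ≤ A :=
    hA ▸ mul_le_mul_of_nonneg_left (integral_Ioi_gaussianPDFReal_le ht) M.cast_nonneg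
  have hgap : A - M * Q ≤ A / t ^ 2 := by
    have hlow := mul_le_mul_of_nonneg_left (sub_le_integral_Ioi_gaussianPDFReal ht)
      (M.cast_nonneg (α := ℝ))
    have hsplit : M * (gaussianPDFReal 0 1 t / t) / t ^ 2 = M * (gaussianPDFReal 0 1 t / t) -
        M * (gaussianPDFReal 0 1 t / t - gaussianPDFReal 0 1 t / t ^ 3) := by
      field_simp
      ring
    rw [hA, hsplit]
    linarith
  have hAB : A ≤ B := millsExceedance_le hε hM
  have hA0 : 0 ≤ A := millsExceedance_nonneg (by linarith) L
  have hgapB : A / t ^ 2 ≤ A * B := by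
    rw [ht2, mul_one_div]
    exact div_le_div_of_nonneg_left hA0 (mul_pos (by linarith) (by nlinarith)) (by nlinarith)
  have hsq : A ^ 2 ≤ A * B := by nlinarith
  obtain ⟨hlow, hup⟩ := one_sub_pow_sub_one_sub_mem_Icc M hQ0 hQ1 hMQ
  rw [stdGaussCdf_eq_one_sub_integral_Ioi]
  exact ⟨hlow, by linarith⟩

theorem stmt3 (ε : ℝ) (hε : 1 < ε) :
    ((fun M : ℕ =>
        (stdGaussCdf (Real.sqrt (2 * Real.log M) * ε)) ^ M -
          (1 - Real.exp (-(ε ^ 2 - 1) * Real.log M) /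
            (2 * Real.sqrt (Real.pi * Real.log M) * ε)))
      =O[atTop] fun M : ℕ =>
        (Real.exp (-(ε ^ 2 - 1) * Real.log M) /
            (2 * Real.sqrt (Real.pi * Real.log M) * ε)) *
          (1 / (Real.log M * (ε ^ 2 - 1)))) ∧
    Tendsto (fun M : ℕ => (stdGaussCdf (Real.sqrt (2 * Real.log M) * ε)) ^ M)
      atTop (nhds 1) := by
  set A := fun M : ℕ => millsExceedance ε (log M)
  set B := fun M : ℕ => 1 / (log M * (ε ^ 2 - 1))
  have hlog : Tendsto (fun M : ℕ => log M) atTop atTop :=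
    tendsto_log_atTop.comp tendsto_natCast_atTop_atTop
  have hlog1 : ∀ᶠ M : ℕ in atTop, 1 ≤ log M := hlog.eventually_ge_atTop 1
  have hε2 : 0 < ε ^ 2 - 1 := by nlinarith
  have hB : Tendsto B atTop (𝓝 0) :=
    (hlog.atTop_mul_const hε2).inv_tendsto_atTop.congr fun M => (one_div _).symm
  have hA : Tendsto A atTop (𝓝 0) :=
    tendsto_of_tendsto_of_tendsto_of_le_of_le' tendsto_const_nhds hB
      (Eventually.of_forall fun M => millsExceedance_nonneg (by linarith) _)
      (hlog1.mono fun M hM => millsExceedance_le hε hM)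
  have hO : (fun M : ℕ => stdGaussCdf (√(2 * log M) * ε) ^ M - (1 - A M)) =O[atTop]
      fun M => A M * B M := by
    refine .of_bound 2 (hlog1.mono fun M hM => ?_)
    obtain ⟨hlow, hup⟩ := stdGaussCdf_pow_sub_mem_Icc hε hM
    have hAB : 0 ≤ A M * B M :=
      mul_nonneg (millsExceedance_nonneg (by linarith) _) (one_div_nonneg.mpr (by positivity))
    rwa [norm_of_nonneg hlow, norm_of_nonneg hAB]
  refine ⟨hO, ?_⟩
  have hdiff := hO.trans_tendsto (by simpa using hA.mul hB)
  simpa using hdiff.add ((tendsto_const_nhds (x := (1 : ℝ))).sub hA)
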